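/- For the graph family G_k of the previous context (k stars with k leaves whose centers form a clique, plus one apex vertex s), the hierarchical hub labeling L given by L(s) = {s}, L(c_i) = {s} ∪ {c_j : j ≥ i}, L(leaf_{i,j}) = {s, c_i} has total label size 1 + 2k² + ∑_{i=0}^{k-1}(k − i + 1), and hence average label size O(1), i.e., bounded by a constant independent of k. -/
import Mathlib


/-- Vertices of the graph `G_k`: the apex `none`, the star centers `some (inl i)`,
and the star leaves `some (inr (i,j))`. -/
abbrev GkVert (k : ℕ) := Option (Fin k ⊕ (Fin k × Fin k))

/-- The star center `c_j`. -/
def vC {k : ℕ} (j : Fin k) : GkVert k := some (Sum.inl j)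

/-- The labeling `L(s) = {s}`, `L(c_i) = {s} ∪ {c_j : j ≥ i}`,
`L(leaf_{i,j}) = {s, c_i}`, as finite sets. -/
def GkLabel {k : ℕ} : GkVert k → Finset (GkVert k)
  | none => {none}
  | some (Sum.inl i) =>
      insert none ((Finset.univ.filter fun j : Fin k => i ≤ j).image vC)
  | some (Sum.inr a) => {none, vC a.1}

lemma Gk_card_center {k : ℕ} (i : Fin k) : (GkLabel (vC i)).card = k - i + 1 := by
  have hinj : Function.Injective (vC (k := k)) := by
    intro a b h; simpa [vC] using h
  rw [vC, GkLabel, Finset.card_insert_of_notMem (by simp [vC]),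
    Finset.card_image_of_injective _ hinj]
  have : (Finset.univ.filter fun j : Fin k => i ≤ j) = Finset.Ici i := by
    ext j; simp
  rw [this, Fin.card_Ici]

lemma Gk_total (k : ℕ) : ∑ v : GkVert k, (GkLabel v).card =
      1 + 2 * k ^ 2 + ∑ i ∈ Finset.range k, (k - i + 1) := by
  rw [Fintype.sum_option, Fintype.sum_sum_type]
  have h1 : ∀ a : Fin k × Fin k, (GkLabel (some (Sum.inr a))).card = 2 := by
    intro a; simp [GkLabel, vC]
  have h2 : ∀ i : Fin k, (GkLabel (some (Sum.inl i))).card = k - i + 1 :=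
    fun i => Gk_card_center i
  simp only [h1, h2]
  rw [Finset.sum_const, Fin.sum_univ_eq_sum_range (fun i => k - i + 1)]
  simp [GkLabel]
  ring

/-- The total label size of this hierarchical hub labeling of `G_k`
is `1 + 2k² + ∑_{i=0}^{k-1} (k - i + 1)`, and hence the average label size is
`O(1)`: the total is bounded by a constant times the number `n = 1 + k + k²` of
vertices, uniformly in `k`. -/
theorem Gk_total_label_size :
    (∀ k : ℕ, ∑ v : GkVert k, (GkLabel v).card =
      1 + 2 * k ^ 2 + ∑ i ∈ Finset.range k, (k - i + 1)) ∧
    ∃ C : ℕ, ∀ k : ℕ,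
      ∑ v : GkVert k, (GkLabel v).card ≤ C * (1 + k + k ^ 2) := by
  refine ⟨Gk_total, 3, fun k => ?_⟩
  rw [Gk_total]
  have : ∑ i ∈ Finset.range k, (k - i + 1) ≤ ∑ i ∈ Finset.range k, (k + 1) :=
    Finset.sum_le_sum fun i _ => by omega
  simp only [Finset.sum_const, Finset.card_range, smul_eq_mul] at this
  nlinarith
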